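/- arXiv:1212.1579 — 4 statements merged into one kernel-verified Lean document; each statement's English description precedes it below -/
import Mathlib

section
/- As u → ∞, ξ(u) = log u + log log u + O(log log u / log u); that is, there exist constants C and u₀ ≥ 3 such that |ξ(u) − log u − log log u| ≤ C·(log log u)/(log u) for all u ≥ u₀. -/
open Real

/-! The defining equation is `exp ξ = u ξ + 1`, i.e. `ξ = log u + log ξ + ε` with
`0 ≤ ε = log (1 + (u ξ)⁻¹) ≤ 1 / log u`. Since `exp ξ - 1 ≤ ξ exp ξ`, also `log u ≤ ξ`, so
`D := ξ - log u - log log u = log (ξ / log u) + ε` is nonnegative, and `log y ≤ y - 1` at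
`y = ξ / log u` gives `D ≤ (D + log log u + 1) / log u`. For `u ≥ exp (exp 1)` we have
`log u ≥ 2` and `log log u ≥ 1`, so this solves to `D ≤ 4 log log u / log u`. -/

lemma exp_sub_one_le_mul_exp (x : ℝ) : exp x - 1 ≤ x * exp x := by
  have h := mul_le_mul_of_nonneg_right (one_sub_le_exp_neg x) (exp_pos x).le
  rw [← exp_add, neg_add_cancel, exp_zero] at h
  linarith

lemma log_le_of_exp_eq_mul_add_one {u x : ℝ} (hx : 0 < x) (h : exp x = u * x + 1) :
    log u ≤ x := by
  have hux : 0 < u * x := by linarith [add_one_le_exp x]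
  have hu : u ≤ exp x := le_of_mul_le_mul_right (by linarith [exp_sub_one_le_mul_exp x]) hx
  exact (log_le_iff_le_exp (pos_of_mul_pos_left hux hx.le)).2 hu

lemma eq_log_add_log_add_log_one_add_inv {u x : ℝ} (hu : 0 < u) (hx : 0 < x)
    (h : exp x = u * x + 1) : x = log u + log x + log (1 + (u * x)⁻¹) := by
  have hux : u * x ≠ 0 := (mul_pos hu hx).ne'
  rw [← log_mul hu.ne' hx.ne', ← log_mul hux (by positivity), mul_add, mul_one,
    mul_inv_cancel₀ hux, ← h, log_exp]

lemma abs_sub_sub_log_le {L x ε : ℝ} (hL : exp 1 ≤ L) (hLx : L ≤ x) (hε₀ : 0 ≤ ε)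
    (hε : ε ≤ L⁻¹) (hx : x = L + log x + ε) : |x - L - log L| ≤ 4 * log L / L := by
  have hL₀ : 0 < L := (exp_pos 1).trans_le hL
  have hL₂ : 2 ≤ L := by linarith [add_one_le_exp 1]
  have hlogL : 1 ≤ log L := (le_log_iff_exp_le hL₀).2 hL
  have hlog_mono : log L ≤ log x := log_le_log hL₀ hLx
  have hlog_sub : (log x - log L) * L ≤ x - L := by
    have h := log_le_sub_one_of_pos (div_pos (hL₀.trans_le hLx) hL₀)
    rw [log_div (hL₀.trans_le hLx).ne' hL₀.ne'] at h
    calc (log x - log L) * L ≤ (x / L - 1) * L := mul_le_mul_of_nonneg_right h hL₀.le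
      _ = x - L := by field_simp
  have hεL : ε * L ≤ 1 :=
    (mul_le_mul_of_nonneg_right hε hL₀.le).trans_eq (inv_mul_cancel₀ hL₀.ne')
  have hD₀ : 0 ≤ x - L - log L := by linarith
  rw [abs_of_nonneg hD₀, le_div_iff₀ hL₀]
  nlinarith [mul_nonneg hD₀ (sub_nonneg.2 hL₂)]

/-- As `u → ∞`, `ξ(u) = log u + log log u + O(log log u / log u)`. -/
theorem xi_asymptotic (ξ : ℝ → ℝ)
    (hξ : ∀ u : ℝ, 1 < u → 0 < ξ u ∧ (Real.exp (ξ u) - 1) / ξ u = u) :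
    ∃ C u₀ : ℝ, 3 ≤ u₀ ∧ ∀ u : ℝ, u₀ ≤ u →
      |ξ u - Real.log u - Real.log (Real.log u)| ≤
        C * Real.log (Real.log u) / Real.log u := by
  have h₃ : 3 ≤ exp (exp 1) := by linarith [add_one_le_exp 1, add_one_le_exp (exp 1)]
  refine ⟨4, exp (exp 1), h₃, fun u hu => ?_⟩
  have hu₀ : 0 < u := by linarith
  obtain ⟨hx, hξu⟩ := hξ u (by linarith)
  have hexp : exp (ξ u) = u * ξ u + 1 := by
    rw [div_eq_iff hx.ne'] at hξu
    linarith
  have hL : exp 1 ≤ log u := (le_log_iff_exp_le hu₀).2 hu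
  have hLx := log_le_of_exp_eq_mul_add_one hx hexp
  have hux : log u ≤ u * ξ u := hLx.trans (le_mul_of_one_le_left hx.le (by linarith))
  have hinv : 0 ≤ (u * ξ u)⁻¹ := by positivity
  refine abs_sub_sub_log_le hL hLx (log_nonneg (by linarith)) ?_
    (eq_log_add_log_add_log_one_add_inv hu₀ hx hexp)
  calc log (1 + (u * ξ u)⁻¹) ≤ (u * ξ u)⁻¹ := by
        linarith [log_le_sub_one_of_pos (show 0 < 1 + (u * ξ u)⁻¹ by linarith)]
    _ ≤ (log u)⁻¹ := inv_anti₀ ((exp_pos 1).trans_le hL) hux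
end

section
/- For every u > 1 one has u·ξ(u) + Ein(−ξ(u)) = ∫₁^u ξ(t) dt, where Ein(s) = ∫₀^s (1−e^{−t})/t dt (with the integrand extended continuously by the value 1 at t = 0); equivalently, u·ξ(u) − ∫₀^{ξ(u)} (e^{s}−1)/s ds = ∫₁^u ξ(t) dt. -/
/-!
The function `g = dslope exp 0`, i.e. `x ↦ (eˣ - 1)/x` with `g 0 = 1`, is continuous and strictly
increasing (its values are secant slopes of the strictly convex `exp` through `0`), and `ξ` inverts
it on `(0, ∞)`. The identity is then the integral of an inverse function,
`∫_{g 0}^{g y} ξ = y g(y) - 0·g(0) - ∫_0^y g`, obtained by substituting `t = g x` and integrating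
`x g'(x)` by parts; the `Ein` form follows from `t ↦ -t`.
-/

open MeasureTheory Set Real

theorem StrictConvexOn.strictMonoOn_dslope {S : Set ℝ} {f : ℝ → ℝ} {a : ℝ}
    (hf : StrictConvexOn ℝ S f) (ha : a ∈ S) (hfa : DifferentiableAt ℝ f a) :
    StrictMonoOn (dslope f a) S := by
  intro x hx y hy hxy
  rcases eq_or_ne x a with rfl | hxa
  · rw [dslope_same, dslope_of_ne _ hxy.ne']
    exact hf.deriv_lt_slope hx hy hxy hfa
  rcases eq_or_ne y a with rfl | hya
  · rw [dslope_same, dslope_of_ne _ hxa, slope_comm]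
    exact hf.slope_lt_deriv hx hy hxy hfa
  rw [dslope_of_ne _ hxa, dslope_of_ne _ hya, slope_def_field, slope_def_field]
  exact hf.secant_strict_mono ha hx hy hxa hya hxy

theorem intervalIntegral.integral_leftInvOn_eq_sub_integral {f φ : ℝ → ℝ} {a b : ℝ}
    (hab : a ≤ b) (hf : ContinuousOn f (Icc a b)) (hmono : StrictMonoOn f (Icc a b))
    (hd : ∀ x ∈ Ioo a b, DifferentiableAt ℝ f x) (hφ : ∀ x ∈ Ioo a b, φ (f x) = x) :
    ∫ t in f a..f b, φ t = b * f b - a * f a - ∫ x in a..b, f x := by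
  have hmono' : MonotoneOn f (Ioo a b) := hmono.monotoneOn.mono Ioo_subset_Icc_self
  have hderiv : ∀ x ∈ Ioo a b, HasDerivAt f (deriv f x) x := fun x hx => (hd x hx).hasDerivAt
  -- makes `deriv f` integrable, as the integration by parts needs
  have hderiv_nonneg : ∀ x ∈ Ioo a b, 0 ≤ deriv f x := fun x hx =>
    (hderiv x hx).hasDerivWithinAt.nonneg_of_monotoneOn (by
      simpa using (PerfectSpace.univ_preperfect x (mem_univ x)).nhds_inter
        (Ioo_mem_nhds hx.1 hx.2)) hmono'
  have hsubst : ∫ t in Ioo (f a) (f b), φ t = ∫ x in Ioo a b, deriv f x • φ (f x) := by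
    rw [← hf.image_Ioo_of_strictMonoOn hab hmono]
    exact integral_image_eq_integral_deriv_smul_of_monotoneOn measurableSet_Ioo
      (fun x hx => (hderiv x hx).hasDerivWithinAt) hmono' φ
  calc ∫ t in f a..f b, φ t = ∫ x in a..b, x * deriv f x := by
        rw [intervalIntegral.integral_of_le (hmono.monotoneOn ⟨le_rfl, hab⟩ ⟨hab, le_rfl⟩ hab),
          intervalIntegral.integral_of_le hab, integral_Ioc_eq_integral_Ioo,
          integral_Ioc_eq_integral_Ioo, hsubst]
        refine setIntegral_congr_fun measurableSet_Ioo fun x hx => ?_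
        rw [hφ x hx, smul_eq_mul, mul_comm]
    _ = b * f b - a * f a - ∫ x in a..b, 1 * f x := by
        have hIoo : Ioo (min a b) (max a b) = Ioo a b := by rw [min_eq_left hab, max_eq_right hab]
        refine intervalIntegral.integral_mul_deriv_eq_deriv_mul_of_hasDerivAt
          continuousOn_id (uIcc_of_le hab ▸ hf) (fun x _ => hasDerivAt_id x)
          (hIoo ▸ hderiv) intervalIntegrable_const ?_
        exact intervalIntegral.intervalIntegrable_deriv_of_nonneg (uIcc_of_le hab ▸ hf)
          (hIoo ▸ hderiv) (hIoo ▸ hderiv_nonneg)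
    _ = b * f b - a * f a - ∫ x in a..b, f x := by simp_rw [one_mul]

namespace Real

theorem dslope_exp_zero (x : ℝ) : dslope exp 0 x = if x = 0 then 1 else (exp x - 1) / x := by
  split_ifs with hx
  · simp [hx]
  · rw [dslope_of_ne _ hx, slope_def_field, exp_zero, sub_zero]

theorem strictMono_dslope_exp_zero : StrictMono (dslope exp 0) :=
  strictMonoOn_univ.1 (strictConvexOn_exp.strictMonoOn_dslope (mem_univ 0) differentiableAt_exp)

theorem continuous_dslope_exp_zero : Continuous (dslope exp 0) :=
  continuousOn_univ.1 ((continuousOn_dslope Filter.univ_mem).2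
    ⟨continuous_exp.continuousOn, differentiableAt_exp⟩)

theorem integral_one_sub_exp_neg_div (y : ℝ) :
    ∫ t in (0:ℝ)..(-y), (if t = 0 then 1 else (1 - exp (-t)) / t) =
      -∫ s in (0:ℝ)..y, dslope exp 0 s := by
  have hneg : ∀ s : ℝ, (if -s = 0 then 1 else (1 - exp (-(-s))) / -s) = dslope exp 0 s := by
    intro s
    simp only [dslope_exp_zero, neg_eq_zero, neg_neg, div_neg, ← neg_div, neg_sub]
  have hsubst := intervalIntegral.integral_comp_neg (a := 0) (b := y)
    fun t : ℝ => if t = 0 then 1 else (1 - exp (-t)) / t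
  simp only [hneg, neg_zero] at hsubst
  rw [hsubst, intervalIntegral.integral_symm]

end Real

theorem xi_integral_identity_general (ξ : ℝ → ℝ)
    (hξ : ∀ u : ℝ, 1 < u → 0 < ξ u ∧ (Real.exp (ξ u) - 1) / ξ u = u) :
    ∀ u : ℝ, 1 < u →
      u * ξ u + (∫ t in (0:ℝ)..(-ξ u), (if t = 0 then 1 else (1 - Real.exp (-t)) / t)) =
        (∫ t in (1:ℝ)..u, ξ t) ∧
      u * ξ u - (∫ s in (0:ℝ)..(ξ u), (if s = 0 then 1 else (Real.exp s - 1) / s)) =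
        (∫ t in (1:ℝ)..u, ξ t) := by
  intro u hu
  have hg_zero : dslope exp 0 0 = 1 := by simp
  have hgξ : ∀ t, 1 < t → dslope exp 0 (ξ t) = t := fun t ht => by
    rw [dslope_exp_zero, if_neg (hξ t ht).1.ne', (hξ t ht).2]
  have hξg : ∀ x ∈ Ioo 0 (ξ u), ξ (dslope exp 0 x) = x := fun x hx =>
    strictMono_dslope_exp_zero.injective <|
      hgξ _ (hg_zero ▸ strictMono_dslope_exp_zero hx.1)
  have key := intervalIntegral.integral_leftInvOn_eq_sub_integral (hξ u hu).1.le
    continuous_dslope_exp_zero.continuousOn (strictMono_dslope_exp_zero.strictMonoOn _)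
    (fun x hx => (differentiableAt_dslope_of_ne hx.1.ne').2 differentiableAt_exp) hξg
  rw [hg_zero, hgξ u hu] at key
  simp_rw [integral_one_sub_exp_neg_div, ← dslope_exp_zero]
  constructor <;> linarith

/-- For every `u > 1`, `u·ξ(u) + Ein(−ξ(u)) = ∫₁^u ξ(t) dt`, where
`Ein(s) = ∫₀^s (1−e^{−t})/t dt` (integrand extended by `1` at `t = 0`);
equivalently `u·ξ(u) − ∫₀^{ξ(u)} (e^s−1)/s ds = ∫₁^u ξ(t) dt`. -/
theorem xi_integral_identity (ξ : ℝ → ℝ)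
    (hξ1 : ξ 1 = 0)
    (hξ : ∀ u : ℝ, 1 < u → 0 < ξ u ∧ (Real.exp (ξ u) - 1) / ξ u = u) :
    ∀ u : ℝ, 1 < u →
      u * ξ u + (∫ t in (0:ℝ)..(-ξ u), (if t = 0 then 1 else (1 - Real.exp (-t)) / t)) =
        (∫ t in (1:ℝ)..u, ξ t) ∧
      u * ξ u - (∫ s in (0:ℝ)..(ξ u), (if s = 0 then 1 else (Real.exp s - 1) / s)) =
        (∫ t in (1:ℝ)..u, ξ t) :=
  xi_integral_identity_general ξ hξ
end

section
/- (Evertse–Moree–Stewart–Tijdeman bounds) For every u ≥ 1, exp( −∫₂^{u+1} ξ(t) dt ) ≤ ρ(u) ≤ exp( −∫₁^{u} ξ(t) dt ). -/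
open MeasureTheory Real Set intervalIntegral

/-!
Both bounds come from a comparison principle for the delay equation
`u ρ(u) = ∫_{u-1}^u ρ`: if `u f(u) ≤ ∫_{u-1}^u f` and `∫_{u-1}^u g ≤ u g(u)` for `u > a`, and
`f ≤ g` on `[a-1, a]`, then `f ≤ g` from there on, because at a negative minimum of `g - f` the
window integral would be too large.

Since `ξ` is increasing and `(e^{ξ(v)} - 1)/ξ(v) = v`, comparing with `e^{ξ(v)(v-t)}` on the
window shows that `exp(-∫₁^t ξ)` satisfies the second inequality and `exp(-∫₂^{t+1} ξ)` the
first. The upper bound then starts on `[0, 1]`, where `ρ = 1`. The lower bound starts on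
`[1, 2]`: there `ρ(v) ≥ 1 - log v` (compare with `1 - log⁺`, which solves the equation), and
`exp(-∫₂^{v+1} ξ) ≤ exp(-(v-1) ξ(2)) ≤ 1 - log v` by concavity of `log (1 - log v)` together
with `e^{-ξ(2)} = 1/(1 + 2ξ(2)) ≤ 1 - log 2`.
-/

theorem exp_sub_one_div_lt_exp_sub_one_div {x y : ℝ} (hx : 0 < x) (hxy : x < y) :
    (exp x - 1) / x < (exp y - 1) / y := by
  have hslope := strictConvexOn_exp.slope_strict_mono_adjacent (mem_univ 0) (mem_univ y) hx hxy
  rw [exp_zero, sub_zero, div_lt_div_iff₀ hx (sub_pos.2 hxy)] at hslope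
  rw [div_lt_div_iff₀ hx (hx.trans hxy)]
  nlinarith

theorem sub_mul_le_integral_of_le {f : ℝ → ℝ} {p q c : ℝ} (hpq : p ≤ q)
    (hf : IntervalIntegrable f volume p q) (h : ∀ t ∈ Icc p q, c ≤ f t) :
    (q - p) * c ≤ ∫ t in p..q, f t := by
  simpa using integral_mono_on hpq intervalIntegrable_const hf h

theorem integral_le_sub_mul_of_le {f : ℝ → ℝ} {p q c : ℝ} (hpq : p ≤ q)
    (hf : IntervalIntegrable f volume p q) (h : ∀ t ∈ Icc p q, f t ≤ c) :
    ∫ t in p..q, f t ≤ (q - p) * c := by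
  simpa using integral_mono_on hpq hf intervalIntegrable_const h

theorem integral_exp_mul_sub {c : ℝ} (hc : c ≠ 0) (v : ℝ) :
    ∫ t in (v - 1)..v, exp (c * (v - t)) = (exp c - 1) / c := by
  rw [integral_comp_sub_left (fun s => exp (c * s)), sub_self, sub_sub_cancel,
    integral_comp_mul_left (fun s => exp s) hc, integral_exp, mul_zero, mul_one, exp_zero,
    smul_eq_mul, inv_mul_eq_div]

theorem integral_exp_neg_le_of_sub_le {F : ℝ → ℝ} {c v : ℝ} (hc : c ≠ 0)
    (hF : ContinuousOn F (Icc (v - 1) v))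
    (hFc : ∀ t ∈ Icc (v - 1) v, F v - F t ≤ c * (v - t)) :
    ∫ t in (v - 1)..v, exp (-F t) ≤ (exp c - 1) / c * exp (-F v) := by
  calc ∫ t in (v - 1)..v, exp (-F t)
      ≤ ∫ t in (v - 1)..v, exp (-F v) * exp (c * (v - t)) := by
        refine integral_mono_on (by linarith)
          ((continuous_exp.comp_continuousOn hF.neg).intervalIntegrable_of_Icc (by linarith))
          ((by fun_prop : Continuous fun t => exp (-F v) * exp (c * (v - t))).intervalIntegrable
            _ _) fun t ht => ?_
        rw [← exp_add]
        exact exp_le_exp.2 (by linarith [hFc t ht])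
    _ = (exp c - 1) / c * exp (-F v) := by
        rw [intervalIntegral.integral_const_mul, integral_exp_mul_sub hc, mul_comm]

theorem le_integral_exp_neg_of_le_sub {F : ℝ → ℝ} {c v : ℝ} (hc : c ≠ 0)
    (hF : ContinuousOn F (Icc (v - 1) v))
    (hFc : ∀ t ∈ Icc (v - 1) v, c * (v - t) ≤ F v - F t) :
    (exp c - 1) / c * exp (-F v) ≤ ∫ t in (v - 1)..v, exp (-F t) := by
  calc (exp c - 1) / c * exp (-F v)
      = ∫ t in (v - 1)..v, exp (-F v) * exp (c * (v - t)) := by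
        rw [intervalIntegral.integral_const_mul, integral_exp_mul_sub hc, mul_comm]
    _ ≤ ∫ t in (v - 1)..v, exp (-F t) := by
        refine integral_mono_on (by linarith)
          ((by fun_prop : Continuous fun t => exp (-F v) * exp (c * (v - t))).intervalIntegrable
            _ _) ((continuous_exp.comp_continuousOn hF.neg).intervalIntegrable_of_Icc (by linarith))
          fun t ht => ?_
        rw [← exp_add]
        exact exp_le_exp.2 (by linarith [hFc t ht])

theorem nonneg_of_integral_le_mul_self {w : ℝ → ℝ} {a b : ℝ} (ha : 0 < a)
    (hw : ContinuousOn w (Icc (a - 1) b)) (hbase : ∀ t ∈ Icc (a - 1) a, 0 ≤ w t)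
    (hrec : ∀ u ∈ Ioc a b, ∫ t in (u - 1)..u, w t ≤ u * w u) :
    ∀ t ∈ Icc (a - 1) b, 0 ≤ w t := by
  rcases lt_or_ge b a with hba | hab
  · exact fun t ht => hbase t ⟨ht.1, ht.2.trans hba.le⟩
  obtain ⟨x, hx, hmin⟩ := isCompact_Icc.exists_isMinOn (nonempty_Icc.2 hab)
    (hw.mono (Icc_subset_Icc (by linarith) le_rfl))
  suffices 0 ≤ w x from fun t ht => (le_total t a).elim (fun hta => hbase t ⟨ht.1, hta⟩)
    fun hat => this.trans (hmin ⟨hat, ht.2⟩)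
  by_contra! hneg
  have hxa : a < x := hx.1.lt_of_ne fun h => hneg.not_ge (h ▸ hbase a ⟨by linarith, le_rfl⟩)
  have hint : ∀ p ∈ Icc (a - 1) b, ∀ q ∈ Icc (a - 1) b, IntervalIntegrable w volume p q :=
    fun p hp q hq => (hw.mono (uIcc_subset_Icc hp hq)).intervalIntegrable
  have hwin := hrec x ⟨hxa, hx.2⟩
  rcases le_total (x - 1) a with hstraddle | hinside
  · have hleft : 0 ≤ ∫ t in (x - 1)..a, w t :=
      integral_nonneg hstraddle fun t ht => hbase t ⟨by linarith [ht.1], ht.2⟩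
    have hright : (x - a) * w x ≤ ∫ t in a..x, w t :=
      sub_mul_le_integral_of_le hxa.le (hint a ⟨by linarith, hab⟩ x ⟨by linarith, hx.2⟩)
        fun t ht => hmin ⟨ht.1, ht.2.trans hx.2⟩
    rw [← integral_add_adjacent_intervals
      (hint _ ⟨by linarith, by linarith⟩ a ⟨by linarith, hab⟩)
      (hint a ⟨by linarith, hab⟩ x ⟨by linarith, hx.2⟩)] at hwin
    nlinarith
  · have hall : (x - (x - 1)) * w x ≤ ∫ t in (x - 1)..x, w t :=
      sub_mul_le_integral_of_le (by linarith)
        (hint _ ⟨by linarith, by linarith [hx.2]⟩ x ⟨by linarith, hx.2⟩)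
        fun t ht => hmin ⟨hinside.trans ht.1, ht.2.trans hx.2⟩
    nlinarith

theorem le_of_subsolution_of_supersolution {f g : ℝ → ℝ} {a b : ℝ} (ha : 0 < a)
    (hf : ContinuousOn f (Icc (a - 1) b)) (hg : ContinuousOn g (Icc (a - 1) b))
    (hbase : ∀ t ∈ Icc (a - 1) a, f t ≤ g t)
    (hsub : ∀ u ∈ Ioc a b, u * f u ≤ ∫ t in (u - 1)..u, f t)
    (hsuper : ∀ u ∈ Ioc a b, ∫ t in (u - 1)..u, g t ≤ u * g u) :
    ∀ t ∈ Icc (a - 1) b, f t ≤ g t := by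
  have hdiff := nonneg_of_integral_le_mul_self ha (hg.sub hf)
    (fun t ht => sub_nonneg.2 (hbase t ht)) fun u hu => by
      have hwin : Icc (u - 1) u ⊆ Icc (a - 1) b := Icc_subset_Icc (by linarith [hu.1]) hu.2
      simp only [Pi.sub_apply]
      rw [integral_sub ((hg.mono hwin).intervalIntegrable_of_Icc (by linarith))
        ((hf.mono hwin).intervalIntegrable_of_Icc (by linarith))]
      linarith [hsub u hu, hsuper u hu]
  exact fun t ht => sub_nonneg.1 (hdiff t ht)

theorem integral_one_sub_posLog {u : ℝ} (hu : u ∈ Icc (1 : ℝ) 2) :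
    ∫ t in (u - 1)..u, (1 - log⁺ t) = u * (1 - log u) := by
  have hleft : ∫ t in (u - 1)..1, log⁺ t = 0 := by
    rw [integral_congr (g := fun _ => 0) fun t ht => ?_, intervalIntegral.integral_zero]
    rw [uIcc_of_le (by linarith [hu.2])] at ht
    exact (posLog_eq_zero_iff t).2 (abs_le.2 ⟨by linarith [ht.1, hu.1], ht.2⟩)
  have hright : ∫ t in (1 : ℝ)..u, log⁺ t = u * log u - u + 1 := by
    rw [integral_congr (g := log) fun t ht => ?_, integral_log, log_one]
    · ring
    rw [uIcc_of_le hu.1] at ht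
    exact posLog_eq_log (by rw [abs_of_nonneg (by linarith [ht.1])]; exact ht.1)
  rw [integral_sub intervalIntegrable_const (continuous_posLog.intervalIntegrable _ _),
    ← integral_add_adjacent_intervals (continuous_posLog.intervalIntegrable _ 1)
      (continuous_posLog.intervalIntegrable 1 _), hleft, hright, intervalIntegral.integral_const,
    smul_eq_mul]
  ring

theorem one_sub_log_le_of_supersolution {ρ : ℝ → ℝ} (hρ : ContinuousOn ρ (Icc 0 2))
    (hρ1 : ∀ t ∈ Icc (0 : ℝ) 1, 1 ≤ ρ t)
    (hsuper : ∀ u ∈ Ioc (1 : ℝ) 2, ∫ t in (u - 1)..u, ρ t ≤ u * ρ u)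
    {v : ℝ} (hv : v ∈ Icc (1 : ℝ) 2) : 1 - log v ≤ ρ v := by
  have hcmp := le_of_subsolution_of_supersolution (f := fun t => 1 - log⁺ t) one_pos
    (by fun_prop) (by rwa [sub_self]) (fun t ht => ?_) (fun u hu => ?_) hsuper v
    ⟨by linarith [hv.1], hv.2⟩
  · rwa [posLog_eq_log (by rw [abs_of_nonneg (by linarith [hv.1])]; exact hv.1)] at hcmp
  · rw [sub_self] at ht
    rw [(posLog_eq_zero_iff t).2 (abs_le.2 ⟨by linarith [ht.1], ht.2⟩), sub_zero]
    exact hρ1 t ht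
  · rw [integral_one_sub_posLog ⟨hu.1.le, hu.2⟩,
      posLog_eq_log (by rw [abs_of_nonneg (by linarith [hu.1])]; exact hu.1.le)]

theorem antitoneOn_mul_one_sub_log : AntitoneOn (fun v => v * (1 - log v)) (Ici 1) := by
  intro x hx y hy hxy
  have hx0 : 0 < x := one_pos.trans_le hx
  have hy0 : 0 < y := hx0.trans_le hxy
  have hratio : y - x ≤ y * (log y - log x) := by
    have h := one_sub_inv_le_log_of_pos (div_pos hy0 hx0)
    rw [inv_div, log_div hy0.ne' hx0.ne'] at h
    have := mul_le_mul_of_nonneg_left h hy0.le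
    rwa [mul_sub, mul_one, mul_div_cancel₀ _ hy0.ne'] at this
  nlinarith [log_nonneg hx]

theorem concaveOn_log_one_sub_log : ConcaveOn ℝ (Ico 1 (exp 1)) fun v => log (1 - log v) := by
  have hpos : ∀ v ∈ Ico 1 (exp 1), 0 < 1 - log v := fun v hv =>
    sub_pos.2 ((log_lt_iff_lt_exp (by linarith [hv.1])).2 hv.2)
  have hderiv : ∀ v ∈ Ioo 1 (exp 1),
      HasDerivAt (fun v => log (1 - log v)) (-(v * (1 - log v))⁻¹) v := fun v hv => by
    convert ((hasDerivAt_log (by linarith [hv.1] : v ≠ 0)).const_sub 1).log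
      (hpos v (Ioo_subset_Ico_self hv)).ne' using 1
    rw [mul_inv, neg_div, div_eq_mul_inv]
  refine AntitoneOn.concaveOn_of_deriv (convex_Ico 1 (exp 1)) ?_ ?_ ?_
  · exact (continuousOn_const.sub (continuousOn_log.mono fun v hv => ne_of_gt (by
      linarith [hv.1]))).log fun v hv => (hpos v hv).ne'
  · rw [interior_Ico]
    exact fun v hv => (hderiv v hv).differentiableAt.differentiableWithinAt
  · rw [interior_Ico]
    intro x hx y hy hxy
    rw [(hderiv x hx).deriv, (hderiv y hy).deriv, neg_le_neg_iff]
    exact inv_anti₀ (mul_pos (by linarith [hy.1]) (hpos y (Ioo_subset_Ico_self hy)))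
      (antitoneOn_mul_one_sub_log hx.1.le hy.1.le hxy)

structure IsDickmanXi (ξ : ℝ → ℝ) : Prop where
  eq_zero : ∀ t : ℝ, 0 ≤ t → t ≤ 1 → ξ t = 0
  pos_and_eq : ∀ u : ℝ, 1 < u → 0 < ξ u ∧ (exp (ξ u) - 1) / ξ u = u

namespace IsDickmanXi

variable {ξ : ℝ → ℝ}

theorem pos (hξ : IsDickmanXi ξ) {u : ℝ} (hu : 1 < u) : 0 < ξ u := (hξ.pos_and_eq u hu).1

theorem exp_eq (hξ : IsDickmanXi ξ) {u : ℝ} (hu : 1 < u) : exp (ξ u) = 1 + u * ξ u := by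
  have h := (hξ.pos_and_eq u hu).2
  rw [div_eq_iff (hξ.pos hu).ne'] at h
  linarith

theorem le_of_exp_sub_one_le (hξ : IsDickmanXi ξ) {c u : ℝ} (hc : 0 < c) (hu : 1 < u)
    (h : exp c - 1 ≤ u * c) : c ≤ ξ u := by
  by_contra! hlt
  have hslope := exp_sub_one_div_lt_exp_sub_one_div (hξ.pos hu) hlt
  rw [(hξ.pos_and_eq u hu).2, lt_div_iff₀ hc] at hslope
  linarith

theorem nonneg (hξ : IsDickmanXi ξ) {t : ℝ} (ht : 0 ≤ t) : 0 ≤ ξ t := by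
  rcases le_or_gt t 1 with ht1 | ht1
  · exact (hξ.eq_zero t ht ht1).ge
  · exact (hξ.pos ht1).le

theorem monotoneOn (hξ : IsDickmanXi ξ) : MonotoneOn ξ (Ici 0) := by
  intro s hs t ht hst
  rcases le_or_gt s 1 with hs1 | hs1
  · rw [hξ.eq_zero s hs hs1]
    exact hξ.nonneg ht
  · refine hξ.le_of_exp_sub_one_le (hξ.pos hs1) (hs1.trans_le hst) ?_
    rw [hξ.exp_eq hs1]
    nlinarith [hξ.pos hs1]

theorem intervalIntegrable (hξ : IsDickmanXi ξ) {p q : ℝ} (hp : 0 ≤ p) (hq : 0 ≤ q) :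
    IntervalIntegrable ξ volume p q :=
  (hξ.monotoneOn.mono fun _ hx => (le_min hp hq).trans hx.1).intervalIntegrable

theorem continuousOn_primitive (hξ : IsDickmanXi ξ) {p : ℝ} (hp : 0 ≤ p) :
    ContinuousOn (fun x => ∫ t in p..x, ξ t) (Ici 0) := by
  intro x hx
  set B := max p x + 1
  have hB : ContinuousOn (fun x => ∫ t in p..x, ξ t) (Icc 0 B) := by
    have h := continuousOn_primitive_interval' (a := p)
      (hξ.intervalIntegrable (p := 0) (q := B) le_rfl (by positivity))
      (by rw [uIcc_of_le (by positivity)]; exact ⟨hp, by linarith [le_max_left p x]⟩)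
    rwa [uIcc_of_le (by positivity)] at h
  refine (hB x ⟨hx, by linarith [le_max_right p x]⟩).mono_of_mem_nhdsWithin ?_
  rw [← Ici_inter_Iic]
  exact inter_mem_nhdsWithin _ (Iic_mem_nhds (by linarith [le_max_right p x]))

theorem continuousOn_exp_neg_primitive (hξ : IsDickmanXi ξ) {p : ℝ} (hp : 0 ≤ p) :
    ContinuousOn (fun t => exp (-∫ s in p..t, ξ s)) (Ici 0) :=
  continuous_exp.comp_continuousOn (hξ.continuousOn_primitive hp).neg

theorem continuousOn_exp_neg_primitive_add_one (hξ : IsDickmanXi ξ) {p : ℝ} (hp : 0 ≤ p) :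
    ContinuousOn (fun t => exp (-∫ s in p..(t + 1), ξ s)) (Ici (-1)) :=
  (hξ.continuousOn_exp_neg_primitive hp).comp (by fun_prop) fun t ht => by
    simp only [mem_Ici] at ht ⊢
    linarith

theorem one_le_exp_neg_primitive (hξ : IsDickmanXi ξ) {p t : ℝ} (ht : 0 ≤ t) (htp : t ≤ p) :
    1 ≤ exp (-∫ s in p..t, ξ s) := by
  rw [integral_symm, neg_neg]
  exact one_le_exp (integral_nonneg htp fun s hs => hξ.nonneg (ht.trans hs.1))

theorem integral_exp_neg_primitive_le (hξ : IsDickmanXi ξ) {p v : ℝ} (hp : 0 ≤ p)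
    (hv : 1 < v) :
    ∫ t in (v - 1)..v, exp (-∫ s in p..t, ξ s) ≤ v * exp (-∫ s in p..v, ξ s) := by
  have hξv := hξ.pos hv
  have key := integral_exp_neg_le_of_sub_le hξv.ne' (v := v) (F := fun t => ∫ s in p..t, ξ s)
    ((hξ.continuousOn_primitive hp).mono fun t ht => by simp only [mem_Ici]; linarith [ht.1])
    fun t ht => by
      rw [integral_interval_sub_left (hξ.intervalIntegrable hp (by linarith))
        (hξ.intervalIntegrable hp (by linarith [ht.1])), mul_comm]
      exact integral_le_sub_mul_of_le ht.2 (hξ.intervalIntegrable (by linarith [ht.1])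
        (by linarith)) fun s hs => hξ.monotoneOn (by simp only [mem_Ici]; linarith [ht.1, hs.1])
          (by simp only [mem_Ici]; linarith) hs.2
  rwa [hξ.exp_eq hv, add_sub_cancel_left, mul_div_cancel_right₀ _ hξv.ne'] at key

theorem le_integral_exp_neg_primitive_add_one (hξ : IsDickmanXi ξ) {p v : ℝ} (hp : 0 ≤ p)
    (hv : 1 < v) :
    v * exp (-∫ s in p..(v + 1), ξ s) ≤ ∫ t in (v - 1)..v, exp (-∫ s in p..(t + 1), ξ s) := by
  have hξv := hξ.pos hv
  have key := le_integral_exp_neg_of_le_sub hξv.ne' (v := v)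
    (F := fun t => ∫ s in p..(t + 1), ξ s)
    ((hξ.continuousOn_primitive hp).comp (by fun_prop) fun t ht => by
      simp only [mem_Ici]; linarith [ht.1])
    fun t ht => by
      rw [integral_interval_sub_left (hξ.intervalIntegrable hp (by linarith))
        (hξ.intervalIntegrable hp (by linarith [ht.1])), mul_comm]
      convert sub_mul_le_integral_of_le (p := t + 1) (q := v + 1) (c := ξ v) (by linarith [ht.2])
        (hξ.intervalIntegrable (by linarith [ht.1]) (by linarith)) fun s hs =>
          hξ.monotoneOn (by simp only [mem_Ici]; linarith)
            (by simp only [mem_Ici]; linarith [ht.1, hs.1]) (by linarith [ht.1, hs.1]) using 2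
      ring
  rwa [hξ.exp_eq hv, add_sub_cancel_left, mul_div_cancel_right₀ _ hξv.ne'] at key

theorem seven_div_six_le_apply_two (hξ : IsDickmanXi ξ) : 7 / 6 ≤ ξ 2 := by
  refine hξ.le_of_exp_sub_one_le (by norm_num) one_lt_two ?_
  -- `e^{7/6} = e · e^{1/6} < 2.7183 · 6/5 < 1 + 2 · 7/6`
  have he := exp_one_lt_d9
  have hsmall := exp_bound_div_one_sub_of_interval' (x := 1 / 6) (by norm_num) (by norm_num)
  rw [show (7 / 6 : ℝ) = 1 + 1 / 6 by norm_num, exp_add]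
  nlinarith [exp_pos 1, exp_pos (1 / 6)]

theorem exp_neg_apply_two_le_one_sub_log_two (hξ : IsDickmanXi ξ) : exp (-ξ 2) ≤ 1 - log 2 := by
  have hξ2 := hξ.seven_div_six_le_apply_two
  have hlog := log_two_lt_d9
  rw [exp_neg, hξ.exp_eq one_lt_two, inv_le_iff_one_le_mul₀ (by linarith)]
  nlinarith

theorem exp_neg_primitive_add_one_le_one_sub_log (hξ : IsDickmanXi ξ) {v : ℝ}
    (hv : v ∈ Icc (1 : ℝ) 2) : exp (-∫ s in (2 : ℝ)..(v + 1), ξ s) ≤ 1 - log v := by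
  obtain ⟨hv1, hv2⟩ := hv
  have hlog2 : 0 < 1 - log 2 := by linarith [log_two_lt_d9]
  have hint : (v - 1) * ξ 2 ≤ ∫ s in (2 : ℝ)..(v + 1), ξ s := by
    convert sub_mul_le_integral_of_le (p := 2) (q := v + 1) (by linarith)
      (hξ.intervalIntegrable (by norm_num) (by linarith)) fun s hs =>
        hξ.monotoneOn (by norm_num) (by simp only [mem_Ici]; linarith [hs.1]) hs.1 using 2
    ring
  have hchord : (v - 1) * log (1 - log 2) ≤ log (1 - log v) := by
    have h := concaveOn_log_one_sub_log.2 (x := 1) (y := 2) ⟨le_rfl, one_lt_exp_iff.2 one_pos⟩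
      ⟨one_le_two, lt_trans (by norm_num) exp_one_gt_d9⟩ (show 0 ≤ 2 - v by linarith)
      (show 0 ≤ v - 1 by linarith) (by ring)
    simp only [smul_eq_mul, log_one, sub_zero, mul_zero, zero_add] at h
    rwa [show (2 - v) * 1 + (v - 1) * 2 = v by ring] at h
  have hξ2 : -ξ 2 ≤ log (1 - log 2) :=
    (le_log_iff_exp_le hlog2).2 hξ.exp_neg_apply_two_le_one_sub_log_two
  calc exp (-∫ s in (2 : ℝ)..(v + 1), ξ s) ≤ exp ((v - 1) * log (1 - log 2)) := by
        gcongr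
        nlinarith
    _ ≤ 1 - log v := by
        rw [← exp_log (show 0 < 1 - log v by linarith [log_le_log (by linarith) hv2])]
        exact exp_le_exp.2 hchord

end IsDickmanXi

/-- Evertse–Moree–Stewart–Tijdeman bounds: for every `u ≥ 1`,
`exp(−∫₂^{u+1} ξ(t) dt) ≤ ρ(u) ≤ exp(−∫₁^u ξ(t) dt)`. -/
theorem dickman_EMST_bounds (ρ ξ : ℝ → ℝ)
    (hρcont : ContinuousOn ρ (Set.Ici 0))
    (hρ1 : ∀ u : ℝ, 0 ≤ u → u ≤ 1 → ρ u = 1)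
    (hρ2 : ∀ u : ℝ, 1 < u → ρ u = (1 / u) * ∫ t in (0:ℝ)..1, ρ (u - t))
    (hξ0 : ∀ t : ℝ, 0 ≤ t → t ≤ 1 → ξ t = 0)
    (hξ : ∀ u : ℝ, 1 < u → 0 < ξ u ∧ (Real.exp (ξ u) - 1) / ξ u = u) :
    ∀ u : ℝ, 1 ≤ u →
      Real.exp (-∫ t in (2:ℝ)..(u + 1), ξ t) ≤ ρ u ∧
        ρ u ≤ Real.exp (-∫ t in (1:ℝ)..u, ξ t) := by
  have hXi : IsDickmanXi ξ := ⟨hξ0, hξ⟩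
  have hρeq : ∀ u : ℝ, 1 < u → ∫ t in (u - 1)..u, ρ t = u * ρ u := fun u hu => by
    rw [hρ2 u hu, integral_comp_sub_left, sub_zero]
    field_simp
  have hρcont' : ∀ a b : ℝ, 0 ≤ a → ContinuousOn ρ (Icc a b) := fun a b ha =>
    hρcont.mono fun t ht => ha.trans ht.1
  intro u hu
  constructor
  · refine le_of_subsolution_of_supersolution two_pos
      ((hXi.continuousOn_exp_neg_primitive_add_one zero_le_two).mono fun t ht => by
        simp only [mem_Ici]; linarith [ht.1])
      (hρcont' _ _ (by norm_num)) (fun t ht => ?_)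
      (fun v hv => hXi.le_integral_exp_neg_primitive_add_one zero_le_two (one_lt_two.trans hv.1))
      (fun v hv => (hρeq v (one_lt_two.trans hv.1)).le) u ⟨by linarith, le_rfl⟩
    rw [show (2 : ℝ) - 1 = 1 by norm_num] at ht
    exact (hXi.exp_neg_primitive_add_one_le_one_sub_log ht).trans
      (one_sub_log_le_of_supersolution (hρcont' _ _ le_rfl)
        (fun t ht => (hρ1 t ht.1 ht.2).ge) (fun v hv => (hρeq v hv.1).le) ht)
  · refine le_of_subsolution_of_supersolution one_pos (hρcont' _ _ (by norm_num))
      ((hXi.continuousOn_exp_neg_primitive zero_le_one).mono fun t ht => by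
        simp only [mem_Ici]; linarith [ht.1])
      (fun t ht => ?_) (fun v hv => (hρeq v hv.1).ge)
      (fun v hv => hXi.integral_exp_neg_primitive_le zero_le_one hv.1) u ⟨by linarith, le_rfl⟩
    rw [sub_self] at ht
    rw [hρ1 t ht.1 ht.2]
    exact hXi.one_le_exp_neg_primitive ht.1 ht.2
end

section
/- (Rankin's upper bound) For all reals x ≥ 1, y ≥ 2 and every σ > 0, Ψ(x,y) ≤ x^{σ} · ∏_{p prime, p ≤ y} (1 − p^{−σ})^{−1}. -/
/-!
Rankin's trick: every `n ≤ x` satisfies `1 ≤ (x / n) ^ σ`, so `Ψ(x,y)` is at most `x ^ σ` times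
the sum of `n ^ (-σ)` over the `y`-smooth `n`. Since `n ↦ n ^ (-σ)` is completely multiplicative
and `< 1` at primes, that sum over all `y`-smooth numbers is the finite Euler product
`∏_{p ≤ y} (1 - p ^ (-σ))⁻¹`.
-/

open scoped Classical

/-- `Ψ(x,y)`: the number of integers `1 ≤ n ≤ x` all of whose prime factors are `≤ y`. -/
noncomputable def Psi (x y : ℝ) : ℕ :=
  ((Finset.Icc 1 ⌊x⌋₊).filter fun n => ∀ p : ℕ, p.Prime → p ∣ n → (p : ℝ) ≤ y).card

open Finset

noncomputable def Nat.rpowHom (s : ℝ) : ℕ →* ℝ where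
  toFun n := (n : ℝ) ^ s
  map_one' := by simp
  map_mul' m n := by push_cast; exact Real.mul_rpow m.cast_nonneg n.cast_nonneg

@[simp]
lemma Nat.rpowHom_apply (s : ℝ) (n : ℕ) : Nat.rpowHom s n = (n : ℝ) ^ s := rfl

lemma Nat.rpowHom_neg_lt_one {σ : ℝ} (hσ : 0 < σ) {p : ℕ} (hp : 1 < p) :
    Nat.rpowHom (-σ) p < 1 :=
  Real.rpow_lt_one_of_one_lt_of_neg (by exact_mod_cast hp) (neg_neg_iff_pos.mpr hσ)

lemma card_le_rpow_mul_sum_rpow_neg {A : Finset ℕ} {x σ : ℝ} (hσ : 0 ≤ σ)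
    (hA : ∀ n ∈ A, 0 < n ∧ (n : ℝ) ≤ x) :
    (#A : ℝ) ≤ x ^ σ * ∑ n ∈ A, (n : ℝ) ^ (-σ) := by
  rw [card_eq_sum_ones, Nat.cast_sum, Nat.cast_one, mul_sum]
  refine sum_le_sum fun n hn => ?_
  obtain ⟨hn0, hnx⟩ := hA n hn
  have hn0 : (0 : ℝ) < n := by exact_mod_cast hn0
  calc (1 : ℝ) ≤ (x / n) ^ σ := Real.one_le_rpow ((one_le_div hn0).mpr hnx) hσ
    _ = x ^ σ * (n : ℝ) ^ (-σ) := by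
      rw [Real.div_rpow (hn0.le.trans hnx) hn0.le, Real.rpow_neg hn0.le, div_eq_mul_inv]

lemma sum_le_prod_primesBelow_geometric {f : ℕ →* ℝ} (hf₀ : ∀ n, 0 ≤ f n)
    (hf₁ : ∀ {p : ℕ}, p.Prime → f p < 1) {N : ℕ} {A : Finset ℕ} (hA : ↑A ⊆ N.smoothNumbers) :
    ∑ n ∈ A, f n ≤ ∏ p ∈ N.primesBelow, (1 - f p)⁻¹ := by
  have hnorm : ∀ {p : ℕ}, p.Prime → ‖f p‖ < 1 := fun hp => by
    rw [Real.norm_of_nonneg (hf₀ _)]; exact hf₁ hp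
  have hsum := hasSum_subtype_iff_indicator.mp
    (EulerProduct.summable_and_hasSum_smoothNumbers_prod_primesBelow_geometric hnorm N).2
  calc ∑ n ∈ A, f n = ∑ n ∈ A, (N.smoothNumbers).indicator f n :=
        sum_congr rfl fun n hn => (Set.indicator_of_mem (hA hn) f).symm
    _ ≤ _ := sum_le_hasSum A (fun n _ => Set.indicator_nonneg (fun m _ => hf₀ m) n) hsum

lemma Psi_filter_subset_smoothNumbers (x y : ℝ) :
    ↑((Finset.Icc 1 ⌊x⌋₊).filter fun n => ∀ p : ℕ, p.Prime → p ∣ n → (p : ℝ) ≤ y) ⊆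
      (⌊y⌋₊ + 1).smoothNumbers := by
  intro n hn
  rw [coe_filter, Set.mem_ofPred_eq] at hn
  exact Nat.mem_smoothNumbers'.mpr fun p hp hpn => Nat.lt_succ_of_le (Nat.le_floor (hn.2 p hp hpn))

lemma Nat.primesBelow_succ_eq_filter_Icc (n : ℕ) :
    (n + 1).primesBelow = (Icc 1 n).filter Nat.Prime := by
  ext p
  simp only [Nat.mem_primesBelow, mem_filter, mem_Icc, Nat.lt_succ_iff]
  exact ⟨fun ⟨hpy, hp⟩ => ⟨⟨hp.one_lt.le, hpy⟩, hp⟩, fun ⟨⟨_, hpy⟩, hp⟩ => ⟨hpy, hp⟩⟩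

theorem rankin_upper_bound_general (x y σ : ℝ) (hx : 1 ≤ x) (hσ : 0 < σ) :
    (Psi x y : ℝ) ≤
      x ^ σ * ∏ p ∈ (Finset.Icc 1 ⌊y⌋₊).filter Nat.Prime,
        (1 - (p : ℝ) ^ (-σ))⁻¹ := by
  set A := (Finset.Icc 1 ⌊x⌋₊).filter fun n => ∀ p : ℕ, p.Prime → p ∣ n → (p : ℝ) ≤ y
  have hA : ∀ n ∈ A, 0 < n ∧ (n : ℝ) ≤ x := fun n hn => by
    obtain ⟨⟨hn1, hnx⟩, -⟩ := mem_filter.mp hn |>.imp_left mem_Icc.mp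
    exact ⟨hn1, (Nat.le_floor_iff (zero_le_one.trans hx)).mp hnx⟩
  calc (Psi x y : ℝ) = #A := rfl
    _ ≤ x ^ σ * ∑ n ∈ A, ((n : ℕ) : ℝ) ^ (-σ) := card_le_rpow_mul_sum_rpow_neg hσ.le hA
    _ ≤ x ^ σ * ∏ p ∈ (⌊y⌋₊ + 1).primesBelow, (1 - ((p : ℕ) : ℝ) ^ (-σ))⁻¹ :=
      mul_le_mul_of_nonneg_left (by
        simpa only [Nat.rpowHom_apply] using
          sum_le_prod_primesBelow_geometric (fun n => Real.rpow_nonneg n.cast_nonneg _)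
            (fun hp => Nat.rpowHom_neg_lt_one hσ hp.one_lt) (Psi_filter_subset_smoothNumbers x y))
        (Real.rpow_nonneg (zero_le_one.trans hx) σ)
    _ = _ := by rw [Nat.primesBelow_succ_eq_filter_Icc]

/-- Rankin's upper bound: for `x ≥ 1`, `y ≥ 2`, `σ > 0`,
`Ψ(x,y) ≤ x^σ · ∏_{p ≤ y prime} (1 − p^{−σ})⁻¹`. -/
theorem rankin_upper_bound (x y σ : ℝ) (hx : 1 ≤ x) (hy : 2 ≤ y) (hσ : 0 < σ) :
    (Psi x y : ℝ) ≤
      x ^ σ * ∏ p ∈ (Finset.Icc 1 ⌊y⌋₊).filter Nat.Prime,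
        (1 - (p : ℝ) ^ (-σ))⁻¹ :=
  rankin_upper_bound_general x y σ hx hσ
end
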